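/- For fixed h > 0 and T > 0, there exists k₀ such that for all k ≥ k₀, the NNWR contraction factor satisfies ρ(k) ≤ (2√6)^{2k} e^{-k²h²/T}, and hence ρ(k) < 1 for all sufficiently large k. -/

import Mathlib

/-! With `c = h² / T > 0`, the term `exp (-(2k+1) c)` tends to `0`, so eventually the
denominator `1 - exp (-(2k+1) c)` is at least `1/2` and the base of the power is at most `2√6`.
Since `(2√6)^(2k) = 24^k`, the bound equals `(24 · exp (-k c))^k`, and `24 · exp (-k c) → 0`. -/

open Real Filter Topology

lemma div_one_sub_le_two_mul {x ε : ℝ} (hx : 0 ≤ x) (hε : ε ≤ 1 / 2) :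
    x / (1 - ε) ≤ 2 * x := by
  rw [div_le_iff₀ (by linarith)]
  nlinarith

lemma Filter.Tendsto.exp_neg_mul_const {α : Type*} {l : Filter α} {f : α → ℝ} {c : ℝ}
    (hf : Tendsto f l atTop) (hc : 0 < c) :
    Tendsto (fun x => Real.exp (-(f x * c))) l (𝓝 0) :=
  tendsto_exp_neg_atTop_nhds_zero.comp (hf.atTop_mul_const hc)

section

variable {c : ℝ}

lemma eventually_contraction_le (hc : 0 < c) : ∀ᶠ k : ℕ in atTop,
    (√6 / (1 - exp (-((2 * k + 1) * c)))) ^ (2 * k) * exp (-((k : ℝ) ^ 2 * c))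
      ≤ (2 * √6) ^ (2 * k) * exp (-((k : ℝ) ^ 2 * c)) := by
  have hlin : Tendsto (fun k : ℕ => 2 * (k : ℝ) + 1) atTop atTop :=
    tendsto_atTop_add_const_right _ _ (tendsto_natCast_atTop_atTop.const_mul_atTop two_pos)
  filter_upwards [(hlin.exp_neg_mul_const hc).eventually (ge_mem_nhds one_half_pos)]
    with k hk
  gcongr
  · have : 0 < 1 - exp (-((2 * k + 1) * c)) := by linarith
    positivity
  · exact div_one_sub_le_two_mul (sqrt_nonneg 6) hk

lemma two_mul_sqrt_six_pow_mul_exp (k : ℕ) :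
    (2 * √6) ^ (2 * k) * exp (-((k : ℝ) ^ 2 * c)) = (24 * exp (-(k * c))) ^ k := by
  have h24 : (2 * √6) ^ 2 = 24 := by
    rw [mul_pow, sq_sqrt (by norm_num)]
    norm_num
  rw [pow_mul, h24, mul_pow, ← exp_nat_mul]
  ring_nf

lemma eventually_two_mul_sqrt_six_pow_mul_exp_lt_one (hc : 0 < c) : ∀ᶠ k : ℕ in atTop,
    (2 * √6) ^ (2 * k) * exp (-((k : ℝ) ^ 2 * c)) < 1 := by
  have hsmall : Tendsto (fun k : ℕ => 24 * exp (-(k * c))) atTop (𝓝 0) := by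
    simpa using (tendsto_natCast_atTop_atTop.exp_neg_mul_const hc).const_mul 24
  filter_upwards [hsmall.eventually (gt_mem_nhds one_pos), eventually_ne_atTop 0]
    with k hk hk0
  rw [two_mul_sqrt_six_pow_mul_exp]
  exact pow_lt_one₀ (by positivity) hk hk0

end

theorem nnwr_contraction_eventual_bound (h T : ℝ) (hh : 0 < h) (hT : 0 < T) :
    (∃ k₀ : ℕ, ∀ k : ℕ, k₀ ≤ k →
      (Real.sqrt 6 / (1 - Real.exp (-((2 * k + 1) * h ^ 2) / T))) ^ (2 * k) *
          Real.exp (-((k : ℝ) ^ 2 * h ^ 2) / T)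
        ≤ (2 * Real.sqrt 6) ^ (2 * k) * Real.exp (-((k : ℝ) ^ 2 * h ^ 2) / T)) ∧
    (∃ k₁ : ℕ, ∀ k : ℕ, k₁ ≤ k →
      (Real.sqrt 6 / (1 - Real.exp (-((2 * k + 1) * h ^ 2) / T))) ^ (2 * k) *
          Real.exp (-((k : ℝ) ^ 2 * h ^ 2) / T) < 1) := by
  have hc : 0 < h ^ 2 / T := by positivity
  simp only [neg_div, mul_div_assoc]
  have hle := eventually_contraction_le hc
  refine ⟨eventually_atTop.1 hle, eventually_atTop.1 ?_⟩
  filter_upwards [hle, eventually_two_mul_sqrt_six_pow_mul_exp_lt_one hc] with k hk hlt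
  exact hk.trans_lt hlt
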